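/- For the instance v = (1,...,1) of the function f(x) = x_{2r+1} ∧ ⋀_{k=1}^{r}(x_{2k-1} ∨ x_{2k}), a subset S of the features {1,...,2r+1} is an abductive explanation (subset-minimal sufficient reason) for the prediction f(v)=1 if and only if 2r+1 ∈ S and for each k ∈ {1,...,r}, exactly one of 2k-1, 2k is in S; consequently there are exactly 2^r abductive explanations. -/
import Mathlib


/-- The function f(x₁,…,x_{2r+1}) = x_{2r+1} ∧ ⋀ₖ (x_{2k-1} ∨ x_{2k}),
with feature xⱼ represented by index j-1. -/
def fRun (r : ℕ) (x : Fin (2*r+1) → Bool) : Bool :=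
  x ⟨2*r, by omega⟩ &&
    decide (∀ k : Fin r, x ⟨2*k.1, by have := k.2; omega⟩ = true ∨
                         x ⟨2*k.1+1, by have := k.2; omega⟩ = true)

/-- `S` is a weak abductive explanation for the instance (v, 1) with v = (1,…,1):
every point agreeing with v on the coordinates in `S` is classified 1. -/
def IsWAXpRun (r : ℕ) (S : Finset (Fin (2*r+1))) : Prop :=
  ∀ x : Fin (2*r+1) → Bool, (∀ i ∈ S, x i = true) → fRun r x = true

/-- `S` is an abductive explanation: a subset-minimal WAXp. -/
def IsAXpRun (r : ℕ) (S : Finset (Fin (2*r+1))) : Prop :=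
  IsWAXpRun r S ∧ ∀ S' ⊆ S, S' ≠ S → ¬ IsWAXpRun r S'

lemma waxp_iff (r : ℕ) (S : Finset (Fin (2*r+1))) :
    IsWAXpRun r S ↔
      ((⟨2*r, by omega⟩ : Fin (2*r+1)) ∈ S ∧
        ∀ k : Fin r,
          (⟨2*k.1, by have := k.2; omega⟩ : Fin (2*r+1)) ∈ S ∨
          (⟨2*k.1+1, by have := k.2; omega⟩ : Fin (2*r+1)) ∈ S) := by
  constructor
  · intro h
    constructor
    · by_contra hmem
      have := h (fun i => decide (i ∈ S)) (fun i hi => by simp [hi])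
      simp [fRun, hmem] at this
    · intro k
      by_contra hk
      push_neg at hk
      obtain ⟨ha, hb⟩ := hk
      set a : Fin (2*r+1) := ⟨2*k.1, by have := k.2; omega⟩ with hadef
      set b : Fin (2*r+1) := ⟨2*k.1+1, by have := k.2; omega⟩ with hbdef
      have := h (fun i => decide (i ≠ a ∧ i ≠ b))
        (fun i hi => by
          simp only [decide_eq_true_eq]
          exact ⟨fun e => ha (e ▸ hi), fun e => hb (e ▸ hi)⟩)
      simp only [fRun, Bool.and_eq_true, decide_eq_true_eq] at this
      have hkk := this.2 k
      simp [hadef, hbdef] at hkk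
  · rintro ⟨h0, h1⟩ x hx
    simp only [fRun, Bool.and_eq_true, decide_eq_true_eq]
    refine ⟨hx _ h0, fun k => ?_⟩
    rcases h1 k with h | h
    · exact Or.inl (hx _ h)
    · exact Or.inr (hx _ h)

lemma axp_iff (r : ℕ) (S : Finset (Fin (2*r+1))) :
    IsAXpRun r S ↔
      ((⟨2*r, by omega⟩ : Fin (2*r+1)) ∈ S ∧
        ∀ k : Fin r,
          ((⟨2*k.1, by have := k.2; omega⟩ : Fin (2*r+1)) ∈ S ∧
            (⟨2*k.1+1, by have := k.2; omega⟩ : Fin (2*r+1)) ∉ S) ∨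
          ((⟨2*k.1, by have := k.2; omega⟩ : Fin (2*r+1)) ∉ S ∧
            (⟨2*k.1+1, by have := k.2; omega⟩ : Fin (2*r+1)) ∈ S)) := by
  constructor
  · rintro ⟨hw, hmin⟩
    obtain ⟨h0, h1⟩ := (waxp_iff r S).mp hw
    refine ⟨h0, fun k => ?_⟩
    have hk2 := k.2
    by_cases ha : (⟨2*k.1, by omega⟩ : Fin (2*r+1)) ∈ S
    · refine Or.inl ⟨ha, fun hb => ?_⟩
      apply hmin (S.erase ⟨2*k.1+1, by omega⟩) (Finset.erase_subset _ _)
        (Finset.erase_ne_self.mpr hb)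
      rw [waxp_iff]
      constructor
      · exact Finset.mem_erase.mpr ⟨Fin.ne_of_val_ne (by simp; omega), h0⟩
      · intro k'
        have hk'2 := k'.2
        by_cases hk' : k' = k
        · subst hk'
          exact Or.inl (Finset.mem_erase.mpr ⟨Fin.ne_of_val_ne (by simp), ha⟩)
        · have hkv : k'.1 ≠ k.1 := fun h => hk' (Fin.ext h)
          rcases h1 k' with h | h
          · exact Or.inl (Finset.mem_erase.mpr ⟨Fin.ne_of_val_ne (by simp; omega), h⟩)
          · exact Or.inr (Finset.mem_erase.mpr ⟨Fin.ne_of_val_ne (by simp; omega), h⟩)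
    · rcases h1 k with h | h
      · exact absurd h ha
      · exact Or.inr ⟨ha, h⟩
  · rintro ⟨h0, h1⟩
    constructor
    · rw [waxp_iff]
      exact ⟨h0, fun k => (h1 k).elim (fun h => Or.inl h.1) (fun h => Or.inr h.2)⟩
    · intro S' hsub hne hw'
      obtain ⟨h0', h1'⟩ := (waxp_iff r S').mp hw'
      obtain ⟨i, hiS, hiS'⟩ : ∃ i ∈ S, i ∉ S' := by
        by_contra hc
        push_neg at hc
        exact hne (Finset.Subset.antisymm hsub hc)
      have hi2 := i.2
      by_cases hir : i.1 = 2*r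
      · have hie : i = ⟨2*r, by omega⟩ := Fin.ext hir
        exact hiS' (hie ▸ h0')
      · have hklt : i.1 / 2 < r := by omega
        set k : Fin r := ⟨i.1/2, hklt⟩ with hkdef
        have hcase : i.1 = 2*k.1 ∨ i.1 = 2*k.1 + 1 := by
          simp only [hkdef]; omega
        rcases h1 k with ⟨hm, hnm⟩ | ⟨hnm, hm⟩
        · have hodd : (⟨2*k.1+1, by have := k.2; omega⟩ : Fin (2*r+1)) ∉ S' :=
            fun h => hnm (hsub h)
          have heven := (h1' k).resolve_right hodd
          rcases hcase with he | he
          · have hie : i = (⟨2*k.1, by have := k.2; omega⟩ : Fin (2*r+1)) := Fin.ext he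
            exact hiS' (hie ▸ heven)
          · have hie : i = (⟨2*k.1+1, by have := k.2; omega⟩ : Fin (2*r+1)) := Fin.ext he
            exact hnm (hie ▸ hiS)
        · have heven : (⟨2*k.1, by have := k.2; omega⟩ : Fin (2*r+1)) ∉ S' :=
            fun h => hnm (hsub h)
          have hodd := (h1' k).resolve_left heven
          rcases hcase with he | he
          · have hie : i = (⟨2*k.1, by have := k.2; omega⟩ : Fin (2*r+1)) := Fin.ext he
            exact hnm (hie ▸ hiS)
          · have hie : i = (⟨2*k.1+1, by have := k.2; omega⟩ : Fin (2*r+1)) := Fin.ext he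
            exact hiS' (hie ▸ hodd)

def gSet (r : ℕ) (b : Fin r → Bool) : Finset (Fin (2*r+1)) :=
  insert ⟨2*r, by omega⟩
    (Finset.univ.image (fun k : Fin r =>
      if b k then (⟨2*k.1, by have := k.2; omega⟩ : Fin (2*r+1))
      else ⟨2*k.1+1, by have := k.2; omega⟩))

lemma mem_gSet_even (r : ℕ) (b : Fin r → Bool) (k : Fin r) :
    (⟨2*k.1, by have := k.2; omega⟩ : Fin (2*r+1)) ∈ gSet r b ↔ b k = true := by
  have hk2 := k.2
  simp only [gSet, Finset.mem_insert, Finset.mem_image, Finset.mem_univ, true_and]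
  constructor
  · rintro (h | ⟨k', hk'⟩)
    · exact absurd (congrArg Fin.val h) (by simp; omega)
    · by_cases hb : b k' = true
      · rw [if_pos hb] at hk'
        have : 2*k'.1 = 2*k.1 := congrArg Fin.val hk'
        have : k' = k := Fin.ext (by omega)
        rwa [this] at hb
      · rw [if_neg hb] at hk'
        exact absurd (congrArg Fin.val hk') (by simp; omega)
  · intro hb
    exact Or.inr ⟨k, by rw [if_pos hb]⟩

lemma mem_gSet_odd (r : ℕ) (b : Fin r → Bool) (k : Fin r) :
    (⟨2*k.1+1, by have := k.2; omega⟩ : Fin (2*r+1)) ∈ gSet r b ↔ b k = false := by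
  have hk2 := k.2
  simp only [gSet, Finset.mem_insert, Finset.mem_image, Finset.mem_univ, true_and]
  constructor
  · rintro (h | ⟨k', hk'⟩)
    · exact absurd (congrArg Fin.val h) (by simp; omega)
    · by_cases hb : b k' = true
      · rw [if_pos hb] at hk'
        exact absurd (congrArg Fin.val hk') (by simp; omega)
      · rw [if_neg hb] at hk'
        have : 2*k'.1+1 = 2*k.1+1 := congrArg Fin.val hk'
        have : k' = k := Fin.ext (by omega)
        rw [this] at hb
        simpa using hb
  · intro hb
    exact Or.inr ⟨k, by rw [if_neg (by simp [hb])]⟩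

lemma mem_gSet_last (r : ℕ) (b : Fin r → Bool) :
    (⟨2*r, by omega⟩ : Fin (2*r+1)) ∈ gSet r b :=
  Finset.mem_insert_self _ _

lemma gSet_inj (r : ℕ) : Function.Injective (gSet r) := by
  intro b b' h
  funext k
  have h1 := mem_gSet_even r b k
  have h2 := mem_gSet_even r b' k
  rw [h] at h1
  rw [h1] at h2
  cases hb : b k <;> cases hb' : b' k <;> simp [hb, hb'] at h2 ⊢

lemma range_gSet (r : ℕ) :
    {S : Finset (Fin (2*r+1)) | IsAXpRun r S} = Set.range (gSet r) := by
  ext S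
  simp only [Set.mem_setOf_eq, Set.mem_range, axp_iff]
  constructor
  · rintro ⟨h0, h1⟩
    refine ⟨fun k => decide ((⟨2*k.1, by have := k.2; omega⟩ : Fin (2*r+1)) ∈ S), ?_⟩
    ext i
    have hi2 := i.2
    by_cases hir : i.1 = 2*r
    · have hie : i = (⟨2*r, by omega⟩ : Fin (2*r+1)) := Fin.ext hir
      rw [hie]
      simp [mem_gSet_last, h0]
    · have hklt : i.1 / 2 < r := by omega
      set k : Fin r := ⟨i.1/2, hklt⟩ with hkdef
      have hcase : i.1 = 2*k.1 ∨ i.1 = 2*k.1 + 1 := by simp only [hkdef]; omega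
      rcases hcase with he | he
      · have hie : i = (⟨2*k.1, by have := k.2; omega⟩ : Fin (2*r+1)) := Fin.ext he
        rw [hie, mem_gSet_even]
        simp
      · have hie : i = (⟨2*k.1+1, by have := k.2; omega⟩ : Fin (2*r+1)) := Fin.ext he
        rw [hie, mem_gSet_odd]
        rcases h1 k with ⟨hm, hnm⟩ | ⟨hnm, hm⟩ <;> simp [hm, hnm]
  · rintro ⟨b, rfl⟩
    refine ⟨mem_gSet_last r b, fun k => ?_⟩
    cases hb : b k
    · exact Or.inr ⟨by rw [mem_gSet_even]; simp [hb], by rw [mem_gSet_odd, hb]⟩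
    · exact Or.inl ⟨by rw [mem_gSet_even, hb], by rw [mem_gSet_odd]; simp [hb]⟩


/-- For v = (1,…,1): S is an AXp for f(v)=1 iff 2r+1 ∈ S and exactly one of
2k-1, 2k is in S for each k; consequently there are exactly 2^r AXps. -/
theorem stmt4 (r : ℕ) :
    (∀ S : Finset (Fin (2*r+1)),
      IsAXpRun r S ↔
        ((⟨2*r, by omega⟩ : Fin (2*r+1)) ∈ S ∧
          ∀ k : Fin r,
            ((⟨2*k.1, by have := k.2; omega⟩ : Fin (2*r+1)) ∈ S ∧
              (⟨2*k.1+1, by have := k.2; omega⟩ : Fin (2*r+1)) ∉ S) ∨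
            ((⟨2*k.1, by have := k.2; omega⟩ : Fin (2*r+1)) ∉ S ∧
              (⟨2*k.1+1, by have := k.2; omega⟩ : Fin (2*r+1)) ∈ S))) ∧
    {S : Finset (Fin (2*r+1)) | IsAXpRun r S}.ncard = 2 ^ r := by
  refine ⟨axp_iff r, ?_⟩
  rw [range_gSet, ← Set.image_univ, Set.ncard_image_of_injective _ (gSet_inj r),
    Set.ncard_univ]
  simp
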